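/- arXiv:math/0001038 — 3 statements merged into one kernel-verified Lean document; each statement's English description precedes it below -/
import Mathlib

section
/- Let m ≥ 1 and let C be a binary self-orthogonal code of length N containing the all-ones vector 𝟏. Then cwe(C(m)) = Σ_D μ_m(D), where the sum is over all subcodes D of C with 𝟏 ∈ D (and where μ_m(D) = 0 whenever dim D > m+1). -/
open Matrix MvPolynomial

noncomputable section

abbrev V (m : ℕ) : Type := Fin m → ZMod 2

/-- σ₁ = [[0,1],[1,0]] -/
def sigma1 : Matrix (ZMod 2) (ZMod 2) ℝ := fun v w => if v = w then 0 else 1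

/-- σ₂ = [[1,0],[0,-1]] -/
def sigma2 : Matrix (ZMod 2) (ZMod 2) ℝ := fun v w =>
  if v = w then (if v = 0 then 1 else -1) else 0

/-- The Kronecker product of `m` 2×2 matrices having `s` in factor `j` and the identity in
all other factors, with coordinates of `ℝ^{2^m}` indexed by `𝔽₂^m`. -/
def kronFactor (m : ℕ) (j : Fin m) (s : Matrix (ZMod 2) (ZMod 2) ℝ) :
    Matrix (V m) (V m) ℝ :=
  fun v w => ∏ i : Fin m, if i = j then s (v i) (w i) else (if v i = w i then 1 else 0)

/-- The extraspecial 2-group `E(m)` as a subgroup of the orthogonal group `O(2^m, ℝ)`. -/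
def Egroup (m : ℕ) : Subgroup (Matrix.orthogonalGroup (V m) ℝ) :=
  Subgroup.closure {g | ∃ j : Fin m,
    (g : Matrix (V m) (V m) ℝ) = kronFactor m j sigma1 ∨
    (g : Matrix (V m) (V m) ℝ) = kronFactor m j sigma2}

/-- The real Clifford group `𝒞_m`, the normalizer of `E(m)` in `O(2^m, ℝ)`. -/
def Clifford (m : ℕ) : Subgroup (Matrix.orthogonalGroup (V m) ℝ) :=
  Subgroup.normalizer ((Egroup m : Subgroup (Matrix.orthogonalGroup (V m) ℝ)) : Set (Matrix.orthogonalGroup (V m) ℝ))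

/-- Action of a matrix on polynomials by linear substitution of the variables:
`x_f ↦ ∑ f', g f' f • x_{f'}`. -/
def polyAct {σ R : Type*} [Fintype σ] [CommSemiring R] (g : Matrix σ σ R)
    (p : MvPolynomial σ R) : MvPolynomial σ R :=
  aeval (fun f => ∑ f' : σ, C (g f' f) * X f') p

/-- The dual of a linear code over `𝔽_p`. -/
def dualCode {p N : ℕ} (C : Submodule (ZMod p) (Fin N → ZMod p)) :
    Submodule (ZMod p) (Fin N → ZMod p) where
  carrier := {v | ∀ c ∈ C, ∑ j, v j * c j = 0}
  add_mem' := by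
    intro a b ha hb c hc
    simp only [Set.mem_setOf_eq] at *
    simp [add_mul, Finset.sum_add_distrib, ha c hc, hb c hc]
  zero_mem' := by
    intro c hc
    simp
  smul_mem' := by
    intro r a ha c hc
    simp only [Set.mem_setOf_eq] at *
    simp [smul_eq_mul, mul_assoc, ← Finset.mul_sum, ha c hc]

/-- `C(m) = C ⊗ 𝔽_{2^m}` : the `𝔽_{p^m}`-linear span of `C` inside `𝔽_{p^m}^N`, under the
identification of `𝔽_{p^m}` with `𝔽_p^m` given by a fixed basis; a word belongs to it iff
it is of the form `j ↦ (rows i j)_i` with all rows in `C`. -/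
def codeExt (p m N : ℕ) (C : Submodule (ZMod p) (Fin N → ZMod p)) :
    Set (Fin N → (Fin m → ZMod p)) :=
  {w | ∃ rows : Fin m → (Fin N → ZMod p), (∀ i, rows i ∈ C) ∧ ∀ j i, w j i = rows i j}

open scoped Classical in
/-- The complete weight enumerator of `C(m)`. -/
def cwe (m N : ℕ) (C : Submodule (ZMod 2) (Fin N → ZMod 2)) : MvPolynomial (V m) ℝ :=
  ∑ w : Fin N → V m, if w ∈ codeExt 2 m N C then ∏ j, X (w j) else 0

/-- The monomial `μ_M = ∏_j x_{M_j}` attached to an `m × N` matrix over `𝔽₂`. -/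
def muM (m N : ℕ) (M : Fin m → Fin N → ZMod 2) : MvPolynomial (V m) ℝ :=
  ∏ j : Fin N, X (fun i => M i j)

open scoped Classical in
/-- `μ_m(D) = ∑_M μ_M`, summed over the `m × N` matrices `M` over `𝔽₂` such that the span of
the rows of `M` together with the all-ones vector equals `D`.  (It is `0` if `𝟏 ∉ D` or
`dim D > m + 1`, since then no such matrix exists.) -/
def muCode (m N : ℕ) (D : Submodule (ZMod 2) (Fin N → ZMod 2)) : MvPolynomial (V m) ℝ :=
  ∑ M : Fin m → Fin N → ZMod 2,
    if Submodule.span (ZMod 2) (Set.range M ∪ {fun _ => 1}) = D then muM m N M else 0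

/-! Transposing identifies the words of `C(m)` with the `m × N` matrices whose rows lie in `C`,
and the word's monomial with `μ_M`. Since `𝟏 ∈ C`, the rows of such a matrix together with `𝟏`
span a subcode `D` of `C` containing `𝟏`, and every such matrix is counted exactly once, in
`μ_m(D)` for that `D`. -/

instance Submodule.finite_of_finite {R M : Type*} [Semiring R] [AddCommMonoid M] [Module R M]
    [Finite M] : Finite (Submodule R M) :=
  Finite.of_injective _ SetLike.coe_injective

theorem Submodule.span_range_union_singleton_le_iff {R E ι : Type*} [Semiring R]
    [AddCommMonoid E] [Module R E] {C : Submodule R E} {v : E} (hv : v ∈ C) (M : ι → E) :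
    Submodule.span R (Set.range M ∪ {v}) ≤ C ↔ ∀ i, M i ∈ C := by
  simp only [Submodule.span_le, Set.union_subset_iff, Set.range_subset_iff,
    Set.singleton_subset_iff, SetLike.mem_coe, hv, and_true]

theorem mem_codeExt_iff {p m N : ℕ} {C : Submodule (ZMod p) (Fin N → ZMod p)}
    {w : Fin N → Fin m → ZMod p} :
    w ∈ codeExt p m N C ↔ ∀ i, (fun j => w j i) ∈ C := by
  constructor
  · rintro ⟨rows, hrows, hw⟩ i
    convert hrows i using 1
    exact funext fun j => hw j i
  · exact fun h => ⟨fun i j => w j i, h, fun _ _ => rfl⟩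

open scoped Classical in
theorem cwe_eq_sum_muM (m N : ℕ) (C : Submodule (ZMod 2) (Fin N → ZMod 2)) :
    cwe m N C = ∑ M : Fin m → Fin N → ZMod 2, if ∀ i, M i ∈ C then muM m N M else 0 :=
  Fintype.sum_equiv (Equiv.piComm _) _ _ fun w => by
    simp only [mem_codeExt_iff]
    rfl

open scoped Classical in
theorem finsum_muCode_eq_sum_muM (m N : ℕ) (C : Submodule (ZMod 2) (Fin N → ZMod 2))
    (h1 : (fun _ => (1 : ZMod 2)) ∈ C) :
    ∑ᶠ D ∈ {D : Submodule (ZMod 2) (Fin N → ZMod 2) | D ≤ C ∧ (fun _ => (1 : ZMod 2)) ∈ D},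
      muCode m N D =
    ∑ M : Fin m → Fin N → ZMod 2, if ∀ i, M i ∈ C then muM m N M else 0 := by
  rw [finsum_mem_eq_finite_toFinset_sum _ (Set.toFinite _)]
  unfold muCode
  rw [Finset.sum_comm]
  refine Finset.sum_congr rfl fun M _ => ?_
  refine (Finset.sum_ite_eq _ _ _).trans (if_congr ?_ rfl rfl)
  rw [Set.Finite.mem_toFinset, Set.mem_ofPred_eq, Submodule.span_range_union_singleton_le_iff h1]
  exact and_iff_left (Submodule.subset_span (Set.mem_union_right _ rfl))

theorem cwe_eq_sum_muCode_general (m N : ℕ)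
    (C : Submodule (ZMod 2) (Fin N → ZMod 2))
    (h1 : (fun _ => (1 : ZMod 2)) ∈ C) :
    cwe m N C = ∑ᶠ D ∈ {D : Submodule (ZMod 2) (Fin N → ZMod 2) |
        D ≤ C ∧ (fun _ => (1 : ZMod 2)) ∈ D}, muCode m N D := by
  rw [cwe_eq_sum_muM, finsum_muCode_eq_sum_muM m N C h1]

/-- for a binary self-orthogonal code `C` containing `𝟏`,
`cwe(C(m)) = ∑_{𝟏 ∈ D ⊆ C} μ_m(D)`. -/
theorem cwe_eq_sum_muCode (m N : ℕ) (hm : 0 < m)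
    (C : Submodule (ZMod 2) (Fin N → ZMod 2)) (hso : C ≤ dualCode C)
    (h1 : (fun _ => (1 : ZMod 2)) ∈ C) :
    cwe m N C = ∑ᶠ D ∈ {D : Submodule (ZMod 2) (Fin N → ZMod 2) |
        D ≤ C ∧ (fun _ => (1 : ZMod 2)) ∈ D}, muCode m N D :=
  cwe_eq_sum_muCode_general m N C h1

end
end

section
/- Let K be a field, V a finite-dimensional K-vector space, M a linear endomorphism of V, and P a finite partially ordered set. Suppose (v_p)_{p∈P} is a family of vectors spanning V and (c_{pq})_{p≤q} are scalars in K such that M v_p = Σ_{q ≥ p} c_{pq} v_q for every p ∈ P, and such that c_{pp} = 1 if and only if p is a maximal element of P. Then the fixed subspace {v ∈ V : M v = v} is spanned by the vectors v_p with p maximal in P. -/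
open scoped Classical in
/-- Let `M` be a linear endomorphism of a finite-dimensional vector space `V`
acting triangularly, with respect to a finite poset `P`, on a spanning family `(v_p)`:
`M v_p = ∑_{q ≥ p} c p q • v_q`, with `c p p = 1` iff `p` is maximal.  Then the fixed
subspace of `M` is spanned by the `v_p` with `p` maximal. -/
theorem fixed_subspace_spanned_by_maximal
    {K : Type*} [Field K] {V : Type*} [AddCommGroup V] [Module K V]
    [FiniteDimensional K V]
    {P : Type*} [Fintype P] [PartialOrder P]
    (M : V →ₗ[K] V) (v : P → V) (c : P → P → K)
    (hspan : Submodule.span K (Set.range v) = ⊤)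
    (htri : ∀ p : P, M (v p) = ∑ q ∈ Finset.univ.filter (fun q => p ≤ q), c p q • v q)
    (hdiag : ∀ p : P, c p p = 1 ↔ IsMax p) :
    Submodule.span K (v '' {p : P | IsMax p}) =
      LinearMap.ker (M - LinearMap.id) := by
  classical
  set N : V →ₗ[K] V := M - LinearMap.id with hN
  set W : Submodule K V := Submodule.span K (v '' {p : P | IsMax p}) with hW
  -- N kills v p for maximal p
  have hNmax : ∀ p : P, IsMax p → N (v p) = 0 := by
    intro p hp
    have hfilt : Finset.univ.filter (fun q => p ≤ q) = {p} := by
      ext q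
      simp only [Finset.mem_filter, Finset.mem_univ, true_and, Finset.mem_singleton]
      exact ⟨fun h => le_antisymm (hp h) h, fun h => h ▸ le_refl p⟩
    have hM : M (v p) = v p := by
      rw [htri p, hfilt, Finset.sum_singleton, (hdiag p).2 hp, one_smul]
    simp [hN, hM]
  have hWker : W ≤ LinearMap.ker N := by
    rw [hW]
    apply Submodule.span_le.2
    rintro x ⟨p, hp, rfl⟩
    exact LinearMap.mem_ker.2 (hNmax p hp)
  have hcomap : W ≤ W.comap N := by
    intro x hx
    have : N x = 0 := LinearMap.mem_ker.1 (hWker hx)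
    simp [Submodule.mem_comap, this]
  set π : V →ₗ[K] V ⧸ W := W.mkQ with hπ
  set Nbar : V ⧸ W →ₗ[K] V ⧸ W := Submodule.mapQ W W N hcomap with hNbar
  have hcomm : ∀ x : V, Nbar (π x) = π (N x) := fun x => rfl
  -- split of triangular sum for non-maximal p
  have hsplit : ∀ p : P, N (v p) = (c p p - 1) • v p
      + ∑ q ∈ Finset.univ.filter (fun q => p < q), c p q • v q := by
    intro p
    have hins : Finset.univ.filter (fun q => p ≤ q)
        = insert p (Finset.univ.filter (fun q => p < q)) := by
      ext q
      simp only [Finset.mem_filter, Finset.mem_univ, true_and, Finset.mem_insert]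
      constructor
      · intro h
        rcases eq_or_lt_of_le h with h' | h'
        · exact Or.inl h'.symm
        · exact Or.inr h'
      · rintro (rfl | h)
        · exact le_refl q
        · exact le_of_lt h
    have hpn : p ∉ Finset.univ.filter (fun q => p < q) := by simp
    have hM : M (v p) = c p p • v p
        + ∑ q ∈ Finset.univ.filter (fun q => p < q), c p q • v q := by
      rw [htri p, hins, Finset.sum_insert hpn]
    simp only [hN, LinearMap.sub_apply, LinearMap.id_apply, hM, sub_smul, one_smul]
    abel
  -- every π (v p) lies in range of Nbar, by downward induction
  have hrange : ∀ p : P, π (v p) ∈ LinearMap.range Nbar := by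
    intro p
    induction p using ((IsWellFounded.wf : WellFounded ((· > ·) : P → P → Prop)).induction) with
    | _ p ih =>
      by_cases hp : IsMax p
      · have : π (v p) = 0 := by
          rw [hπ]
          exact (Submodule.Quotient.mk_eq_zero W).2
            (Submodule.subset_span ⟨p, hp, rfl⟩)
        rw [this]
        exact Submodule.zero_mem _
      · have hc : c p p - 1 ≠ 0 := sub_ne_zero.2 fun h => hp ((hdiag p).1 h)
        have key : Nbar (π (v p)) = (c p p - 1) • π (v p)
            + ∑ q ∈ Finset.univ.filter (fun q => p < q), c p q • π (v q) := by
          rw [hcomm, hsplit p]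
          simp [map_add, map_smul, map_sum]
        have hsum : ∑ q ∈ Finset.univ.filter (fun q => p < q), c p q • π (v q)
            ∈ LinearMap.range Nbar := by
          apply Submodule.sum_mem
          intro q hq
          exact Submodule.smul_mem _ _ (ih q (by simpa using hq))
        have hmem : (c p p - 1) • π (v p) ∈ LinearMap.range Nbar := by
          have h1 : (c p p - 1) • π (v p) = Nbar (π (v p))
              - ∑ q ∈ Finset.univ.filter (fun q => p < q), c p q • π (v q) := by
            rw [key]; abel
          rw [h1]
          exact Submodule.sub_mem _ (LinearMap.mem_range_self _ _) hsum
        have : π (v p) = (c p p - 1)⁻¹ • ((c p p - 1) • π (v p)) := by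
          rw [inv_smul_smul₀ hc]
        rw [this]
        exact Submodule.smul_mem _ _ hmem
  -- Nbar surjective, hence injective
  have hsurj : Function.Surjective Nbar := by
    rw [← LinearMap.range_eq_top, eq_top_iff]
    have h1 := Submodule.map_span π (Set.range v)
    rw [hspan, Submodule.map_top, Submodule.range_mkQ] at h1
    rw [h1]
    apply Submodule.span_le.2
    rintro _ ⟨_, ⟨p, rfl⟩, rfl⟩
    exact hrange p
  have hinj : Function.Injective Nbar := LinearMap.injective_iff_surjective.2 hsurj
  -- conclude
  refine le_antisymm hWker ?_
  intro x hx
  have hNx : N x = 0 := LinearMap.mem_ker.1 hx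
  have : Nbar (π x) = 0 := by rw [hcomm, hNx, map_zero]
  have hx0 : π x = 0 := by
    apply hinj
    rw [this, map_zero]
  exact (Submodule.Quotient.mk_eq_zero W).1 hx0
end

section
/- Let H₈ be the [8,4,4] binary Hamming code, the 𝔽₂-row space of the 4×8 matrix with rows (0,0,0,0,1,1,1,1), (0,0,1,1,0,0,1,1), (0,1,0,1,0,1,0,1), (1,1,1,1,1,1,1,1). Then for every m ≥ 1, the complete weight enumerator h_m := cwe(H₈(m)) satisfies h_m = Σ_{v ∈ 𝔽₂^m} x_v^8 + 14 Σ_{U ∈ G(m,1)} Σ_{d ∈ 𝔽₂^m/U} Π_{v ∈ d+U} x_v^4 + 168 Σ_{U ∈ G(m,2)} Σ_{d ∈ 𝔽₂^m/U} Π_{v ∈ d+U} x_v^2 + 1344 Σ_{U ∈ G(m,3)} Σ_{d ∈ 𝔽₂^m/U} Π_{v ∈ d+U} x_v, where G(m,k) denotes the set of k-dimensional 𝔽₂-subspaces of 𝔽₂^m, the inner sums run over the cosets d + U of U in 𝔽₂^m, and the products run over the elements v of the coset d + U. -/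
open Matrix MvPolynomial

noncomputable section

/-- The `[8,4,4]` binary Hamming code `H₈`. -/
def H8code : Submodule (ZMod 2) (Fin 8 → ZMod 2) :=
  Submodule.span (ZMod 2)
    {![0,0,0,0,1,1,1,1], ![0,0,1,1,0,0,1,1], ![0,1,0,1,0,1,0,1], ![1,1,1,1,1,1,1,1]}

open scoped Classical in
/-- The sum `∑_{U ∈ G(m,k)} ∑_{d ∈ 𝔽₂^m/U} ∏_{v ∈ d+U} x_v^e` over the `k`-dimensional
subspaces `U` of `𝔽₂^m` and the cosets `d + U`. -/
def cosetTerm (m k e : ℕ) : MvPolynomial (V m) ℝ :=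
  ∑ᶠ (U : Submodule (ZMod 2) (V m)) (_ : Module.finrank (ZMod 2) U = k),
    ∑ᶠ d : V m ⧸ U,
      ∏ v ∈ Finset.univ.filter (fun v : V m => (Submodule.Quotient.mk v : V m ⧸ U) = d),
        X v ^ e

/-! The first three generator rows of `H₈` list the eight points of `𝔽₂³` as columns and the
fourth is the all-one word, so `H₈` is the code of affine functions on `𝔽₂³`, and the words of
`H₈(m)` are the value tables `u ↦ B u + c` of the affine maps `𝔽₂³ → 𝔽₂^m`, each coming from a
unique pair `(B, c)`. Such a map hits every point of the coset `c + U`, `U = im B`, exactly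
`|ker B| = 2^(3 - dim U)` times. Grouping the pairs by `U`: the `B` with image `U` correspond to
surjections `𝔽₂³ → 𝔽₂^k` (`k = dim U`), i.e. to `k` linearly independent rows in `𝔽₂³`, of which
there are `∏_{i<k} (8 - 2^i) = 1, 7, 42, 168`, and each coset has `2^k` representatives `c`.
This gives the coefficients `1, 14, 168, 1344`. -/

open Finset LinearMap Module Function

section CosetProducts

variable {R W M S : Type*} [Ring R] [AddCommGroup W] [Module R W] [AddCommGroup M] [Module R M]

theorem card_filter_eq_card_ker [Fintype W] [DecidableEq M] (f : W →ₗ[R] M) {v : M}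
    (hv : v ∈ Set.range f) : #{u | f u = v} = Nat.card (ker f) := by
  classical
  rw [AddMonoidHom.card_fiber_eq_of_mem_range f hv ⟨0, map_zero f⟩, Nat.card_eq_fintype_card,
    ← Fintype.card_subtype]
  simp only [mem_ker]

theorem prod_map_add_eq_prod_coset_pow [Fintype W] [Fintype M] [DecidableEq M] [CommMonoid S]
    (f : W →ₗ[R] M) (c : M) (g : M → S)
    [DecidablePred fun v : M =>
      (Submodule.Quotient.mk v : M ⧸ range f) = Submodule.Quotient.mk c] :
    ∏ u, g (f u + c) =
      ∏ v with (Submodule.Quotient.mk v : M ⧸ range f) = Submodule.Quotient.mk c,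
        g v ^ Nat.card (ker f) := by
  rw [← prod_fiberwise_of_maps_to (g := fun u => f u + c)
    (t := {v | (Submodule.Quotient.mk v : M ⧸ range f) = Submodule.Quotient.mk c}) fun u _ => by
    rw [mem_filter_univ, Submodule.Quotient.eq, add_sub_cancel_right]
    exact mem_range_self f u]
  refine prod_congr rfl fun v hv => ?_
  rw [prod_congr rfl fun u hu => congrArg g (mem_filter.1 hu).2, prod_const]
  rw [mem_filter_univ, Submodule.Quotient.eq] at hv
  simp_rw [← eq_sub_iff_add_eq]
  rw [card_filter_eq_card_ker f hv]

theorem sum_quotient_mk_eq_card_smul [Fintype M] [AddCommMonoid S] (U : Submodule R M)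
    (F : M ⧸ U → S) : ∑ c, F (Submodule.Quotient.mk c) = Nat.card U • ∑ d, F d := by
  classical
  rw [← sum_fiberwise_of_maps_to (g := (Submodule.Quotient.mk : M → M ⧸ U)) (t := univ)
    fun _ _ => mem_univ _, smul_sum]
  refine sum_congr rfl fun d _ => ?_
  rw [sum_congr rfl fun c hc => congrArg F (mem_filter.1 hc).2, sum_const]
  congr 1
  have := card_filter_eq_card_ker U.mkQ (v := d) (U.mkQ_surjective d)
  rwa [Submodule.ker_mkQ] at this

end CosetProducts

section SurjectiveCount

variable {K : Type*} [Field K]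

theorem Matrix.mulVec_surjective_iff_linearIndependent_row {m n : Type*} [Fintype m] [Fintype n]
    (A : Matrix m n K) : Surjective A.mulVec ↔ LinearIndependent K A.row := by
  classical
  rw [linearIndependent_iff_card_eq_finrank_span, Set.finrank, ← A.rank_eq_finrank_span_row,
    Matrix.rank, ← finrank_fintype_fun_eq_card K, ← Matrix.coe_mulVecLin, ← range_eq_top]
  exact ⟨fun h => by rw [h]; exact (finrank_top K _).symm,
    fun h => Submodule.eq_top_of_finrank_eq h.symm⟩

theorem card_matrix_mulVec_surjective [Fintype K] {k n : ℕ} (hk : k ≤ n) :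
    Nat.card {B : Matrix (Fin k) (Fin n) K // Surjective B.mulVec} =
      ∏ i : Fin k, (Fintype.card K ^ n - Fintype.card K ^ (i : ℕ)) := by
  have := card_linearIndependent (K := K) (V := Fin n → K) (k := k) (by rwa [finrank_fin_fun])
  rw [finrank_fin_fun] at this
  exact (Nat.card_congr (Equiv.subtypeEquivRight fun B =>
    B.mulVec_surjective_iff_linearIndependent_row)).trans this

theorem card_range_eq_eq_card_surjective {W M : Type*} [AddCommGroup W] [Module K W]
    [AddCommGroup M] [Module K M] (U : Submodule K M) :
    Nat.card {f : W →ₗ[K] M // range f = U} = Nat.card {f : W →ₗ[K] U // Surjective f} :=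
  Nat.card_congr
    { toFun f := ⟨f.1.codRestrict U fun x => f.2.le (mem_range_self f.1 x), by
        rw [← range_eq_top, range_codRestrict, f.2, Submodule.comap_subtype_self]⟩
      invFun f := ⟨U.subtype ∘ₗ f.1, by
        rw [range_comp, range_eq_top.2 f.2, Submodule.map_top, Submodule.range_subtype]⟩
      left_inv _ := rfl
      right_inv _ := rfl }

theorem card_matrix_range_mulVecLin_eq [Fintype K] {m n : ℕ} (U : Submodule K (Fin m → K)) :
    Nat.card {B : Matrix (Fin m) (Fin n) K // range B.mulVecLin = U} =
      ∏ i : Fin (finrank K U), (Fintype.card K ^ n - Fintype.card K ^ (i : ℕ)) := by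
  by_cases hU : finrank K U ≤ n
  · let e : U ≃ₗ[K] (Fin (finrank K U) → K) := (finBasis K U).equivFun
    calc Nat.card {B : Matrix (Fin m) (Fin n) K // range B.mulVecLin = U}
        = Nat.card {f : (Fin n → K) →ₗ[K] (Fin m → K) // range f = U} :=
          Nat.card_congr (Matrix.toLin'.toEquiv.subtypeEquiv fun _ => Iff.rfl)
      _ = Nat.card {f : (Fin n → K) →ₗ[K] U // Surjective f} :=
          card_range_eq_eq_card_surjective U
      _ = Nat.card {f : (Fin n → K) →ₗ[K] (Fin (finrank K U) → K) // Surjective f} :=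
          Nat.card_congr (e.congrRight.toEquiv.subtypeEquiv fun f =>
            (EquivLike.comp_surjective (⇑f) e).symm)
      _ = Nat.card {B : Matrix (Fin (finrank K U)) (Fin n) K // Surjective B.mulVec} :=
          Nat.card_congr (LinearMap.toMatrix'.toEquiv.subtypeEquiv fun f => by
            rw [LinearEquiv.coe_toEquiv, ← Matrix.coe_mulVecLin, ← Matrix.toLin'_apply',
              Matrix.toLin'_toMatrix'])
      _ = _ := card_matrix_mulVec_surjective hU
  · have : IsEmpty {B : Matrix (Fin m) (Fin n) K // range B.mulVecLin = U} :=
      ⟨fun B => hU (by rw [← B.2]; exact B.1.rank_le_width)⟩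
    rw [Nat.card_of_isEmpty, eq_comm]
    -- the factor `i = n` of the product vanishes
    exact prod_eq_zero (i := ⟨n, not_le.1 hU⟩) (mem_univ _) (by simp)

end SurjectiveCount

theorem Matrix.mulVec_add_injective {m n R : Type*} [CommRing R] [Fintype n] [DecidableEq n] :
    Injective fun p : Matrix m n R × (m → R) => fun u => p.1 *ᵥ u + p.2 := by
  rintro ⟨B, c⟩ ⟨B', c'⟩ h
  obtain rfl : c = c' := by simpa using congr_fun h (0 : n → R)
  have : B.mulVecLin = B'.mulVecLin := LinearMap.ext fun u => add_right_cancel (congr_fun h u)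
  rw [Matrix.toLin'.injective this]

section AffineMaps

variable {K S : Type*} [Field K] [Fintype K] {m n : ℕ}

theorem card_ker_mulVecLin (B : Matrix (Fin m) (Fin n) K) :
    Nat.card (ker B.mulVecLin) = Fintype.card K ^ (n - finrank K (range B.mulVecLin)) := by
  have := finrank_range_add_finrank_ker B.mulVecLin
  rw [finrank_fin_fun] at this
  rw [natCard_eq_pow_finrank (K := K), Nat.card_eq_fintype_card]
  congr 1
  omega

open scoped Classical in
theorem sum_prod_mulVec_add_eq_sum_submodule [CommSemiring S] (g : (Fin m → K) → S) :
    ∑ p : Matrix (Fin m) (Fin n) K × (Fin m → K), ∏ u : Fin n → K, g (p.1 *ᵥ u + p.2) =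
      ∑ U : Submodule K (Fin m → K),
        (Nat.card {B : Matrix (Fin m) (Fin n) K // range B.mulVecLin = U} *
            Fintype.card K ^ finrank K U) •
          ∑ d : (Fin m → K) ⧸ U,
            ∏ v with Submodule.Quotient.mk v = d, g v ^ Fintype.card K ^ (n - finrank K U) := by
  let F (U : Submodule K (Fin m → K)) : S := ∑ d : (Fin m → K) ⧸ U,
    ∏ v with Submodule.Quotient.mk v = d, g v ^ Fintype.card K ^ (n - finrank K U)
  have hB (B : Matrix (Fin m) (Fin n) K) : ∑ c, ∏ u, g (B *ᵥ u + c) =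
      Fintype.card K ^ finrank K (range B.mulVecLin) • F (range B.mulVecLin) := by
    rw [← Nat.card_eq_fintype_card, ← natCard_eq_pow_finrank, ← sum_quotient_mk_eq_card_smul]
    refine sum_congr rfl fun c _ => ?_
    rw [← card_ker_mulVecLin]
    exact prod_map_add_eq_prod_coset_pow B.mulVecLin c g
  rw [Fintype.sum_prod_type, sum_congr rfl fun B _ => hB B,
    ← sum_fiberwise_of_maps_to (t := univ)
      (g := fun B : Matrix (Fin m) (Fin n) K => LinearMap.range B.mulVecLin) fun _ _ => mem_univ _]
  refine sum_congr rfl fun U _ => ?_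
  rw [sum_congr rfl fun B hB => by rw [(mem_filter.1 hB).2], sum_const, smul_smul,
    ← Fintype.card_subtype, ← Nat.card_eq_fintype_card]

end AffineMaps

section Hamming

def H8rows : Fin 4 → Fin 8 → ZMod 2 :=
  ![![0,0,0,0,1,1,1,1], ![0,0,1,1,0,0,1,1], ![0,1,0,1,0,1,0,1], ![1,1,1,1,1,1,1,1]]

def H8point (j : Fin 8) (t : Fin 3) : ZMod 2 := H8rows t.castSucc j

theorem H8point_bijective : Bijective H8point := by decide

theorem H8code_eq_span_range : H8code = Submodule.span (ZMod 2) (Set.range H8rows) := by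
  rw [H8code, H8rows, Matrix.range_cons, Matrix.range_cons, Matrix.range_cons,
    Matrix.range_cons_empty]
  congr 1

theorem sum_smul_H8rows (a : Fin 4 → ZMod 2) :
    ∑ i, a i • H8rows i = fun j => Fin.init a ⬝ᵥ H8point j + a (Fin.last 3) := by
  have : H8rows 3 = 1 := by decide
  ext j
  simp [Fin.sum_univ_castSucc, dotProduct, H8point, Fin.init, this]

theorem mem_H8code_iff (v : Fin 8 → ZMod 2) :
    v ∈ H8code ↔ ∃ b c, (fun j => b ⬝ᵥ H8point j + c) = v := by
  simp_rw [H8code_eq_span_range, Submodule.mem_span_range_iff_exists_fun, sum_smul_H8rows]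
  constructor
  · rintro ⟨a, rfl⟩
    exact ⟨Fin.init a, a (Fin.last 3), rfl⟩
  · rintro ⟨b, c, rfl⟩
    exact ⟨Fin.snoc b c, by simp only [Fin.init_snoc, Fin.snoc_last]⟩

def H8word {m : ℕ} (p : Matrix (Fin m) (Fin 3) (ZMod 2) × V m) : Fin 8 → V m :=
  fun j => p.1 *ᵥ H8point j + p.2

theorem H8word_injective (m : ℕ) : Injective (H8word (m := m)) :=
  H8point_bijective.2.injective_comp_right.comp Matrix.mulVec_add_injective

theorem codeExt_H8code_eq_range (m : ℕ) : codeExt 2 m 8 H8code = Set.range H8word := by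
  ext w
  constructor
  · rintro ⟨rows, hrows, hw⟩
    choose b c hbc using fun i => (mem_H8code_iff (rows i)).1 (hrows i)
    refine ⟨(Matrix.of b, c), funext fun j => funext fun i => ?_⟩
    rw [hw, ← hbc]
    rfl
  · rintro ⟨⟨B, c⟩, rfl⟩
    exact ⟨fun i j => B i ⬝ᵥ H8point j + c i, fun i => (mem_H8code_iff _).2 ⟨B i, c i, rfl⟩,
      fun _ _ => rfl⟩

theorem cwe_H8code_eq_sum (m : ℕ) : cwe m 8 H8code =
    ∑ p : Matrix (Fin m) (Fin 3) (ZMod 2) × V m, ∏ u : Fin 3 → ZMod 2, X (p.1 *ᵥ u + p.2) := by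
  classical
  have hcode : ({w | w ∈ codeExt 2 m 8 H8code} : Finset (Fin 8 → V m)) = univ.image H8word := by
    ext w
    simp [codeExt_H8code_eq_range, eq_comm]
  rw [cwe, ← sum_filter, hcode, sum_image fun p _ q _ h => H8word_injective m h]
  exact sum_congr rfl fun p _ => Fintype.prod_bijective _ H8point_bijective _ _ fun _ => rfl

end Hamming

section CosetTerm

open scoped Classical

theorem cosetTerm_eq_sum (m k e : ℕ) : cosetTerm m k e =
    ∑ U : Submodule (ZMod 2) (V m), if finrank (ZMod 2) U = k then
      ∑ d : V m ⧸ U, ∏ v with Submodule.Quotient.mk v = d, X v ^ e else 0 := by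
  rw [cosetTerm, finsum_eq_sum_of_fintype]
  refine sum_congr rfl fun U _ => ?_
  rw [finsum_eq_if]
  split_ifs
  · rw [finsum_eq_sum_of_fintype]
  · rfl

theorem cosetTerm_zero (m e : ℕ) : cosetTerm m 0 e = ∑ v : V m, X v ^ e := by
  simp_rw [cosetTerm_eq_sum, Submodule.finrank_eq_zero]
  have := sum_quotient_mk_eq_card_smul (⊥ : Submodule (ZMod 2) (V m))
    fun d => ∏ v with Submodule.Quotient.mk v = d, (X v : MvPolynomial (V m) ℝ) ^ e
  rw [Nat.card_unique, one_smul] at this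
  rw [sum_ite_eq' univ ⊥, if_pos (mem_univ _), ← this]
  refine sum_congr rfl fun v _ => ?_
  have : ({w | (Submodule.Quotient.mk w : V m ⧸ (⊥ : Submodule (ZMod 2) (V m))) =
      Submodule.Quotient.mk v} : Finset (V m)) = {v} := by
    ext w
    simp [Submodule.Quotient.eq, sub_eq_zero]
  rw [this, prod_singleton]

end CosetTerm

theorem cwe_hamming_formula_general (m : ℕ) :
    cwe m 8 H8code =
      (∑ v : V m, X v ^ 8)
        + (14 : ℝ) • cosetTerm m 1 4
        + (168 : ℝ) • cosetTerm m 2 2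
        + (1344 : ℝ) • cosetTerm m 3 1 := by
  rw [← cosetTerm_zero, cwe_H8code_eq_sum, sum_prod_mulVec_add_eq_sum_submodule,
    cosetTerm_eq_sum, cosetTerm_eq_sum, cosetTerm_eq_sum, cosetTerm_eq_sum,
    smul_sum, smul_sum, smul_sum, ← sum_add_distrib, ← sum_add_distrib, ← sum_add_distrib]
  refine sum_congr rfl fun U _ => ?_
  rw [card_matrix_range_mulVecLin_eq, ZMod.card]
  rcases finrank (ZMod 2) U with _ | _ | _ | _ | k <;>
    simp [Fin.prod_univ_succ, ← Nat.cast_smul_eq_nsmul ℝ]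

/-- the explicit formula for `h_m = cwe(H₈(m))`. -/
theorem cwe_hamming_formula (m : ℕ) (hm : 0 < m) :
    cwe m 8 H8code =
      (∑ v : V m, X v ^ 8)
        + (14 : ℝ) • cosetTerm m 1 4
        + (168 : ℝ) • cosetTerm m 2 2
        + (1344 : ℝ) • cosetTerm m 3 1 :=
  cwe_hamming_formula_general m

end
end
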